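/- Let N ≥ 1 be an integer, λ > 0, μ > 0, and set c_N = 2(1−λ)N. On the open set Ω = {(x,y) ∈ ℝ^N × ℝ^N : 0 < x_1 < ⋯ < x_N, 0 < y_1 < ⋯ < y_N, and x_N < y_1} define F(x,y) = ∏_{j=1}^N e^{−(x_j²−y_j²)/2} x_j^μ y_j^{λ−μ} · ∏_{1≤j<k≤N} (x_k²−x_j²)^λ (y_k²−y_j²)^λ / ∏_{j,k=1}^N (y_k²−x_j²)^λ. Then on Ω one has H_μ(x) F(x,y) = ( H_{λ−μ}(y) + c_N ) F(x,y), where H_μ(x) is the B_N Calogero Hamiltonian with parameters (μ, λ) acting in the x-variables and H_{λ−μ}(y) the B_N Calogero Hamiltonian with parameters (λ−μ, λ) acting in the y-variables. -/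

import Mathlib

/-- Partial derivative in the `j`-th coordinate of a function on `ℝ^N`. -/
noncomputable def pd {N : ℕ} (j : Fin N) (f : (Fin N → ℝ) → ℝ) : (Fin N → ℝ) → ℝ :=
  fun x => deriv (fun t => f (Function.update x j t)) (x j)

/-- The `B_N` Calogero Hamiltonian with parameters `(mu, lam)` in `N` variables. -/
noncomputable def calogeroB (N : ℕ) (mu lam : ℝ) (f : (Fin N → ℝ) → ℝ) : (Fin N → ℝ) → ℝ :=
  fun x => (∑ j, (- pd j (pd j f) x + ((x j)^2 + mu*(mu-1)/(x j)^2) * f x)) +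
    4*lam*(lam-1) * ∑ j, ∑ k, (if j < k then
      ((x j)^2 + (x k)^2) / ((x j)^2 - (x k)^2)^2 * f x else 0)

/-- The kernel function `F(x,y)` in the `B_N` case. -/
noncomputable def FB (N : ℕ) (mu lam : ℝ) (x y : Fin N → ℝ) : ℝ :=
  (∏ j, Real.exp (-((x j)^2 - (y j)^2)/2) * (x j) ^ mu * (y j) ^ (lam - mu)) *
  (∏ j, ∏ k, (if j < k then ((x k)^2 - (x j)^2) ^ lam * ((y k)^2 - (y j)^2) ^ lam else 1)) /
  ∏ j, ∏ k, ((y k)^2 - (x j)^2) ^ lam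



open Finset Function

def Dom (N : ℕ) (x y : Fin N → ℝ) : Prop :=
  (∀ j, 0 < x j) ∧ (∀ j k : Fin N, j < k → x j < x k) ∧ (∀ j, 0 < y j) ∧
  (∀ j k : Fin N, j < k → y j < y k) ∧ ∀ j k, x j < y k

namespace Dom
variable {N : ℕ} {x y : Fin N → ℝ}

lemma x_pos (h : Dom N x y) (j : Fin N) : 0 < x j := h.1 j
lemma y_pos (h : Dom N x y) (j : Fin N) : 0 < y j := h.2.2.1 j
lemma xx_lt (h : Dom N x y) {j k : Fin N} (hjk : j < k) : (x j)^2 < (x k)^2 := by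
  have := h.2.1 j k hjk
  nlinarith [h.1 j, h.1 k]
lemma yy_lt (h : Dom N x y) {j k : Fin N} (hjk : j < k) : (y j)^2 < (y k)^2 := by
  have := h.2.2.2.1 j k hjk
  nlinarith [h.2.2.1 j, h.2.2.1 k]
lemma xy_lt (h : Dom N x y) (j k : Fin N) : (x j)^2 < (y k)^2 := by
  have := h.2.2.2.2 j k
  nlinarith [h.1 j, h.2.2.1 k]
lemma xx_ne (h : Dom N x y) {j k : Fin N} (hjk : j ≠ k) : (x j)^2 ≠ (x k)^2 := by
  rcases lt_or_gt_of_ne hjk with hc | hc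
  · exact ne_of_lt (h.xx_lt hc)
  · exact (ne_of_lt (h.xx_lt hc)).symm
lemma yy_ne (h : Dom N x y) {j k : Fin N} (hjk : j ≠ k) : (y j)^2 ≠ (y k)^2 := by
  rcases lt_or_gt_of_ne hjk with hc | hc
  · exact ne_of_lt (h.yy_lt hc)
  · exact (ne_of_lt (h.yy_lt hc)).symm

end Dom

noncomputable def GB (N : ℕ) (mu lam : ℝ) (x y : Fin N → ℝ) : ℝ :=
  (∑ j, (-((x j)^2 - (y j)^2)/2 + mu * Real.log (x j) + (lam - mu) * Real.log (y j))) +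
  (∑ j, ∑ k, if j < k then lam * Real.log ((x k)^2 - (x j)^2) + lam * Real.log ((y k)^2 - (y j)^2) else 0) -
  ∑ j, ∑ k, lam * Real.log ((y k)^2 - (x j)^2)

lemma FB_eq_exp {N : ℕ} (mu lam : ℝ) {x y : Fin N → ℝ} (h : Dom N x y) :
    FB N mu lam x y = Real.exp (GB N mu lam x y) := by
  unfold FB GB
  rw [Real.exp_sub, Real.exp_add, Real.exp_sum, Real.exp_sum, Real.exp_sum]
  congr 1
  · congr 1
    · refine Finset.prod_congr rfl fun j _ => ?_
      rw [Real.exp_add, Real.exp_add, Real.rpow_def_of_pos (h.x_pos j),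
        Real.rpow_def_of_pos (h.y_pos j), mul_comm (Real.log (x j)), mul_comm (Real.log (y j))]
    · refine Finset.prod_congr rfl fun j _ => ?_
      rw [Real.exp_sum]
      refine Finset.prod_congr rfl fun k _ => ?_
      by_cases hjk : j < k
      · simp only [hjk, if_true]
        rw [Real.exp_add, Real.rpow_def_of_pos (by linarith [h.xx_lt hjk]),
          Real.rpow_def_of_pos (by linarith [h.yy_lt hjk]), mul_comm lam, mul_comm lam]
      · simp [hjk]
  · refine Finset.prod_congr rfl fun j _ => ?_
    rw [Real.exp_sum]
    refine Finset.prod_congr rfl fun k _ => ?_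
    rw [Real.rpow_def_of_pos (by linarith [h.xy_lt j k]), mul_comm lam]
lemma isOpen_dom_x {N : ℕ} (x y : Fin N → ℝ) (j : Fin N) (h : Dom N x y) :
    IsOpen {t : ℝ | Dom N (update x j t) y} := by
  have e : {t : ℝ | Dom N (update x j t) y} =
      (⋂ i, {t : ℝ | 0 < update x j t i}) ∩
      ((⋂ i, ⋂ k, {t : ℝ | i < k → update x j t i < update x j t k}) ∩
       (⋂ i, ⋂ k, {t : ℝ | update x j t i < y k})) := by
    ext t
    simp only [Set.mem_setOf_eq, Set.mem_inter_iff, Set.mem_iInter, Dom]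
    have h3 := h.2.2.1
    have h4 := h.2.2.2.1
    tauto
  have hc : ∀ i : Fin N, Continuous fun t : ℝ => update x j t i := by
    intro i
    by_cases hij : i = j
    · subst hij; simpa [Function.update_self] using continuous_id'
    · simpa [Function.update_of_ne hij] using continuous_const
  rw [e]
  refine (isOpen_iInter_of_finite fun i => isOpen_lt continuous_const (hc i)).inter (IsOpen.inter ?_ ?_)
  · refine isOpen_iInter_of_finite fun i => isOpen_iInter_of_finite fun k => ?_
    by_cases hik : i < k
    · simpa [hik] using isOpen_lt (hc i) (hc k)
    · simp [hik]
  · exact isOpen_iInter_of_finite fun i => isOpen_iInter_of_finite fun k =>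
      isOpen_lt (hc i) continuous_const

lemma isOpen_dom_y {N : ℕ} (x y : Fin N → ℝ) (k : Fin N) (h : Dom N x y) :
    IsOpen {t : ℝ | Dom N x (update y k t)} := by
  have e : {t : ℝ | Dom N x (update y k t)} =
      (⋂ i, {t : ℝ | 0 < update y k t i}) ∩
      ((⋂ i, ⋂ l, {t : ℝ | i < l → update y k t i < update y k t l}) ∩
       (⋂ i, ⋂ l, {t : ℝ | x i < update y k t l})) := by
    ext t
    simp only [Set.mem_setOf_eq, Set.mem_inter_iff, Set.mem_iInter, Dom]
    have h1 := h.1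
    have h2 := h.2.1
    tauto
  have hc : ∀ i : Fin N, Continuous fun t : ℝ => update y k t i := by
    intro i
    by_cases hik : i = k
    · subst hik; simpa [Function.update_self] using continuous_id'
    · simpa [Function.update_of_ne hik] using continuous_const
  rw [e]
  refine (isOpen_iInter_of_finite fun i => isOpen_lt continuous_const (hc i)).inter (IsOpen.inter ?_ ?_)
  · refine isOpen_iInter_of_finite fun i => isOpen_iInter_of_finite fun l => ?_
    by_cases hil : i < l
    · simpa [hil] using isOpen_lt (hc i) (hc l)
    · simp [hil]
  · exact isOpen_iInter_of_finite fun i => isOpen_iInter_of_finite fun l =>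
      isOpen_lt continuous_const (hc l)

lemma hasDerivAt_sq (c : ℝ) : HasDerivAt (fun t : ℝ => t^2) (2*c) c := by
  simpa using hasDerivAt_pow 2 c
noncomputable def uX (N : ℕ) (mu lam : ℝ) (x y : Fin N → ℝ) (j : Fin N) : ℝ :=
  -x j + mu * (x j)⁻¹ + 2*lam*(x j) *
    ((∑ k, if k = j then 0 else ((x j)^2 - (x k)^2)⁻¹) + ∑ k, ((y k)^2 - (x j)^2)⁻¹)

lemma hasDerivAt_GB_x {N : ℕ} (mu lam : ℝ) {x y : Fin N → ℝ} (h : Dom N x y) (j : Fin N) :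
    HasDerivAt (fun t => GB N mu lam (update x j t) y) (uX N mu lam x y j) (x j) := by
  classical
  have HA : HasDerivAt (fun t => ∑ i, (-((update x j t i)^2 - (y i)^2)/2
      + mu * Real.log (update x j t i) + (lam - mu) * Real.log (y i)))
      (∑ i, if i = j then -x j + mu * (x j)⁻¹ else 0) (x j) := by
    refine HasDerivAt.fun_sum fun i _ => ?_
    by_cases hij : i = j
    · subst hij
      simp only [Function.update_self, eq_self_iff_true, if_true]
      have h1 : HasDerivAt (fun t : ℝ => -(t^2 - (y i)^2)/2) (-(2*x i)/2) (x i) :=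
        (((hasDerivAt_sq (x i)).sub_const _).neg).div_const 2
      have h2 : HasDerivAt (fun t : ℝ => mu * Real.log t) (mu * (x i)⁻¹) (x i) :=
        (Real.hasDerivAt_log (ne_of_gt (h.x_pos i))).const_mul mu
      have h3 := (h1.fun_add h2).add_const ((lam - mu) * Real.log (y i))
      convert h3 using 1
      ring
    · simp only [Function.update_of_ne hij, if_neg hij]
      exact hasDerivAt_const _ _
  have HB : HasDerivAt (fun t => ∑ i, ∑ k, if i < k then
        lam * Real.log ((update x j t k)^2 - (update x j t i)^2)
        + lam * Real.log ((y k)^2 - (y i)^2) else 0)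
      (∑ i, ∑ k, ((if i < k ∧ i = j then lam * (-(2*x j) / ((x k)^2 - (x j)^2)) else 0)
        + (if i < k ∧ k = j then lam * ((2*x j) / ((x j)^2 - (x i)^2)) else 0))) (x j) := by
    refine HasDerivAt.fun_sum fun i _ => HasDerivAt.fun_sum fun k _ => ?_
    by_cases hik : i < k
    · simp only [if_pos hik]
      by_cases hij : i = j
      · subst hij
        have hkj : k ≠ i := ne_of_gt hik
        simp only [Function.update_self, Function.update_of_ne hkj]
        have hpos : (0:ℝ) < (x k)^2 - (x i)^2 := by linarith [h.xx_lt hik]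
        have h1 : HasDerivAt (fun t : ℝ => (x k)^2 - t^2) (-(2*x i)) (x i) :=
          (hasDerivAt_sq (x i)).const_sub _
        have h2 := ((h1.log (ne_of_gt hpos)).const_mul lam).add_const
          (lam * Real.log ((y k)^2 - (y i)^2))
        convert h2 using 1
        simp [hik, hkj]
      · by_cases hkj : k = j
        · subst hkj
          simp only [Function.update_self, Function.update_of_ne hij]
          have hpos : (0:ℝ) < (x k)^2 - (x i)^2 := by linarith [h.xx_lt hik]
          have h1 : HasDerivAt (fun t : ℝ => t^2 - (x i)^2) (2*x k) (x k) :=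
            (hasDerivAt_sq (x k)).sub_const _
          have h2 := ((h1.log (ne_of_gt hpos)).const_mul lam).add_const
            (lam * Real.log ((y k)^2 - (y i)^2))
          convert h2 using 1
          simp [hik, hij]
        · simp only [Function.update_of_ne hij, Function.update_of_ne hkj, hij, hkj,
            and_false, if_false, add_zero]
          exact hasDerivAt_const _ _
    · simp only [if_neg hik, hik, false_and, if_false, add_zero]
      exact hasDerivAt_const _ _
  have HC : HasDerivAt (fun t => ∑ i, ∑ k, lam * Real.log ((y k)^2 - (update x j t i)^2))
      (∑ i, ∑ k, if i = j then lam * (-(2*x j) / ((y k)^2 - (x j)^2)) else 0) (x j) := by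
    refine HasDerivAt.fun_sum fun i _ => HasDerivAt.fun_sum fun k _ => ?_
    by_cases hij : i = j
    · subst hij
      simp only [Function.update_self, eq_self_iff_true, if_true]
      have hpos : (0:ℝ) < (y k)^2 - (x i)^2 := by linarith [h.xy_lt i k]
      have h1 : HasDerivAt (fun t : ℝ => (y k)^2 - t^2) (-(2*x i)) (x i) :=
        (hasDerivAt_sq (x i)).const_sub _
      exact (h1.log (ne_of_gt hpos)).const_mul lam
    · simp only [Function.update_of_ne hij, if_neg hij]
      exact hasDerivAt_const _ _
  have Htot := (HA.fun_add HB).fun_sub HC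
  have efun : (fun t => GB N mu lam (update x j t) y) = fun t =>
      (∑ i, (-((update x j t i)^2 - (y i)^2)/2 + mu * Real.log (update x j t i)
        + (lam - mu) * Real.log (y i)))
      + (∑ i, ∑ k, if i < k then lam * Real.log ((update x j t k)^2 - (update x j t i)^2)
          + lam * Real.log ((y k)^2 - (y i)^2) else 0)
      - ∑ i, ∑ k, lam * Real.log ((y k)^2 - (update x j t i)^2) := rfl
  rw [efun]
  refine Htot.congr_deriv ?_
  have e1 : (∑ i, if i = j then -x j + mu * (x j)⁻¹ else 0) = -x j + mu * (x j)⁻¹ := by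
    rw [Finset.sum_ite_eq' Finset.univ j fun _ => -x j + mu * (x j)⁻¹]
    simp
  have e2 : (∑ i, ∑ k, ((if i < k ∧ i = j then lam * (-(2*x j) / ((x k)^2 - (x j)^2)) else 0)
        + (if i < k ∧ k = j then lam * ((2*x j) / ((x j)^2 - (x i)^2)) else 0)))
      = 2*lam*(x j) * (∑ k, if k = j then 0 else ((x j)^2 - (x k)^2)⁻¹) := by
    simp only [Finset.sum_add_distrib]
    have e21 : (∑ i, ∑ k, (if i < k ∧ i = j then lam * (-(2*x j) / ((x k)^2 - (x j)^2)) else 0))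
        = ∑ k, (if j < k then lam * (-(2*x j) / ((x k)^2 - (x j)^2)) else 0) := by
      rw [Finset.sum_comm]
      refine Finset.sum_congr rfl fun k _ => ?_
      have hh : ∀ i : Fin N, (if i < k ∧ i = j then lam * (-(2*x j) / ((x k)^2 - (x j)^2)) else 0)
          = if i = j then (if j < k then lam * (-(2*x j) / ((x k)^2 - (x j)^2)) else 0) else 0 := by
        intro i
        by_cases hij : i = j
        · subst hij; by_cases hjk : i < k <;> simp [hjk]
        · simp [hij]
      rw [Finset.sum_congr rfl fun i _ => hh i, Finset.sum_ite_eq' Finset.univ j]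
      simp
    have e22 : (∑ i, ∑ k, (if i < k ∧ k = j then lam * ((2*x j) / ((x j)^2 - (x i)^2)) else 0))
        = ∑ i, (if i < j then lam * ((2*x j) / ((x j)^2 - (x i)^2)) else 0) := by
      refine Finset.sum_congr rfl fun i _ => ?_
      have hh : ∀ k : Fin N, (if i < k ∧ k = j then lam * ((2*x j) / ((x j)^2 - (x i)^2)) else 0)
          = if k = j then (if i < j then lam * ((2*x j) / ((x j)^2 - (x i)^2)) else 0) else 0 := by
        intro k
        by_cases hkj : k = j
        · subst hkj; by_cases hik : i < k <;> simp [hik]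
        · simp [hkj]
      rw [Finset.sum_congr rfl fun k _ => hh k, Finset.sum_ite_eq' Finset.univ j]
      simp
    rw [e21, e22, Finset.mul_sum, ← Finset.sum_add_distrib]
    refine Finset.sum_congr rfl fun k _ => ?_
    rcases lt_trichotomy j k with hc | hc | hc
    · have hne : (x k)^2 - (x j)^2 ≠ 0 := ne_of_gt (by linarith [h.xx_lt hc])
      have hne' : (x j)^2 - (x k)^2 ≠ 0 := by
        intro hh; exact hne (by linarith [sub_eq_zero.mp hh])
      have hkj : ¬ k = j := fun hh => (lt_irrefl j (hh ▸ hc))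
      have hkj2 : ¬ k < j := by intro hh; exact absurd (hc.trans hh) (lt_irrefl j)
      simp only [if_pos hc, if_neg hkj2, if_neg hkj, add_zero]
      field_simp
      ring
    · subst hc
      simp [lt_irrefl]
    · have hne : (x j)^2 - (x k)^2 ≠ 0 := ne_of_gt (by linarith [h.xx_lt hc])
      have hkj : ¬ k = j := fun hh => (lt_irrefl k (hh ▸ hc))
      have hjk2 : ¬ j < k := by intro hh; exact absurd (hc.trans hh) (lt_irrefl k)
      simp only [if_neg hjk2, if_pos hc, if_neg hkj, zero_add]
      field_simp
  have e3 : (∑ i, ∑ k, if i = j then lam * (-(2*x j) / ((y k)^2 - (x j)^2)) else 0)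
      = -(2*lam*(x j) * ∑ k, ((y k)^2 - (x j)^2)⁻¹) := by
    have hh : ∀ i : Fin N, (∑ k, if i = j then lam * (-(2*x j) / ((y k)^2 - (x j)^2)) else 0)
        = if i = j then -(2*lam*(x j) * ∑ k, ((y k)^2 - (x j)^2)⁻¹) else 0 := by
      intro i
      by_cases hij : i = j
      · simp only [hij, eq_self_iff_true, if_true]
        rw [Finset.mul_sum, ← Finset.sum_neg_distrib]
        refine Finset.sum_congr rfl fun k _ => ?_
        rw [div_eq_mul_inv]
        ring
      · simp [hij]
    rw [Finset.sum_congr rfl fun i _ => hh i, Finset.sum_ite_eq' Finset.univ j]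
    simp
  rw [e1, e2, e3]
  unfold uX
  ring
noncomputable def uY (N : ℕ) (mu lam : ℝ) (x y : Fin N → ℝ) (k : Fin N) : ℝ :=
  y k + (lam - mu) * (y k)⁻¹ + 2*lam*(y k) *
    ((∑ l, if l = k then 0 else ((y k)^2 - (y l)^2)⁻¹) - ∑ i, ((y k)^2 - (x i)^2)⁻¹)

lemma hasDerivAt_GB_y {N : ℕ} (mu lam : ℝ) {x y : Fin N → ℝ} (h : Dom N x y) (k : Fin N) :
    HasDerivAt (fun t => GB N mu lam x (update y k t)) (uY N mu lam x y k) (y k) := by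
  classical
  have HA : HasDerivAt (fun t => ∑ i, (-((x i)^2 - (update y k t i)^2)/2
      + mu * Real.log (x i) + (lam - mu) * Real.log (update y k t i)))
      (∑ i, if i = k then y k + (lam - mu) * (y k)⁻¹ else 0) (y k) := by
    refine HasDerivAt.fun_sum fun i _ => ?_
    by_cases hik : i = k
    · subst hik
      simp only [Function.update_self, eq_self_iff_true, if_true]
      have h1 : HasDerivAt (fun t : ℝ => -((x i)^2 - t^2)/2) (-(-(2*y i))/2) (y i) :=
        (((hasDerivAt_sq (y i)).const_sub _).neg).div_const 2
      have h2 : HasDerivAt (fun t : ℝ => (lam - mu) * Real.log t) ((lam - mu) * (y i)⁻¹) (y i) :=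
        (Real.hasDerivAt_log (ne_of_gt (h.y_pos i))).const_mul (lam - mu)
      have h3 := (h1.add_const (mu * Real.log (x i))).fun_add h2
      convert h3 using 1
      ring
    · simp only [Function.update_of_ne hik, if_neg hik]
      exact hasDerivAt_const _ _
  have HB : HasDerivAt (fun t => ∑ i, ∑ l, if i < l then
        lam * Real.log ((x l)^2 - (x i)^2)
        + lam * Real.log ((update y k t l)^2 - (update y k t i)^2) else 0)
      (∑ i, ∑ l, ((if i < l ∧ i = k then lam * (-(2*y k) / ((y l)^2 - (y k)^2)) else 0)
        + (if i < l ∧ l = k then lam * ((2*y k) / ((y k)^2 - (y i)^2)) else 0))) (y k) := by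
    refine HasDerivAt.fun_sum fun i _ => HasDerivAt.fun_sum fun l _ => ?_
    by_cases hil : i < l
    · simp only [if_pos hil]
      by_cases hik : i = k
      · subst hik
        have hlk : l ≠ i := ne_of_gt hil
        simp only [Function.update_self, Function.update_of_ne hlk]
        have hpos : (0:ℝ) < (y l)^2 - (y i)^2 := by linarith [h.yy_lt hil]
        have h1 : HasDerivAt (fun t : ℝ => (y l)^2 - t^2) (-(2*y i)) (y i) :=
          (hasDerivAt_sq (y i)).const_sub _
        have h2 := ((h1.log (ne_of_gt hpos)).const_mul lam).const_add
          (lam * Real.log ((x l)^2 - (x i)^2))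
        convert h2 using 1
        simp [hil, hlk]
      · by_cases hlk : l = k
        · subst hlk
          simp only [Function.update_self, Function.update_of_ne hik]
          have hpos : (0:ℝ) < (y l)^2 - (y i)^2 := by linarith [h.yy_lt hil]
          have h1 : HasDerivAt (fun t : ℝ => t^2 - (y i)^2) (2*y l) (y l) :=
            (hasDerivAt_sq (y l)).sub_const _
          have h2 := ((h1.log (ne_of_gt hpos)).const_mul lam).const_add
            (lam * Real.log ((x l)^2 - (x i)^2))
          convert h2 using 1
          simp [hil, hik]
        · simp only [Function.update_of_ne hik, Function.update_of_ne hlk, hik, hlk,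
            and_false, if_false, add_zero]
          exact hasDerivAt_const _ _
    · simp only [if_neg hil, hil, false_and, if_false, add_zero]
      exact hasDerivAt_const _ _
  have HC : HasDerivAt (fun t => ∑ i, ∑ l, lam * Real.log ((update y k t l)^2 - (x i)^2))
      (∑ i, ∑ l, if l = k then lam * ((2*y k) / ((y k)^2 - (x i)^2)) else 0) (y k) := by
    refine HasDerivAt.fun_sum fun i _ => HasDerivAt.fun_sum fun l _ => ?_
    by_cases hlk : l = k
    · subst hlk
      simp only [Function.update_self, eq_self_iff_true, if_true]
      have hpos : (0:ℝ) < (y l)^2 - (x i)^2 := by linarith [h.xy_lt i l]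
      have h1 : HasDerivAt (fun t : ℝ => t^2 - (x i)^2) (2*y l) (y l) :=
        (hasDerivAt_sq (y l)).sub_const _
      exact (h1.log (ne_of_gt hpos)).const_mul lam
    · simp only [Function.update_of_ne hlk, if_neg hlk]
      exact hasDerivAt_const _ _
  have Htot := (HA.fun_add HB).fun_sub HC
  have efun : (fun t => GB N mu lam x (update y k t)) = fun t =>
      (∑ i, (-((x i)^2 - (update y k t i)^2)/2 + mu * Real.log (x i)
        + (lam - mu) * Real.log (update y k t i)))
      + (∑ i, ∑ l, if i < l then lam * Real.log ((x l)^2 - (x i)^2)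
          + lam * Real.log ((update y k t l)^2 - (update y k t i)^2) else 0)
      - ∑ i, ∑ l, lam * Real.log ((update y k t l)^2 - (x i)^2) := rfl
  rw [efun]
  refine Htot.congr_deriv ?_
  have e1 : (∑ i, if i = k then y k + (lam - mu) * (y k)⁻¹ else 0)
      = y k + (lam - mu) * (y k)⁻¹ := by
    rw [Finset.sum_ite_eq' Finset.univ k fun _ => y k + (lam - mu) * (y k)⁻¹]
    simp
  have e2 : (∑ i, ∑ l, ((if i < l ∧ i = k then lam * (-(2*y k) / ((y l)^2 - (y k)^2)) else 0)
        + (if i < l ∧ l = k then lam * ((2*y k) / ((y k)^2 - (y i)^2)) else 0)))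
      = 2*lam*(y k) * (∑ l, if l = k then 0 else ((y k)^2 - (y l)^2)⁻¹) := by
    simp only [Finset.sum_add_distrib]
    have e21 : (∑ i, ∑ l, (if i < l ∧ i = k then lam * (-(2*y k) / ((y l)^2 - (y k)^2)) else 0))
        = ∑ l, (if k < l then lam * (-(2*y k) / ((y l)^2 - (y k)^2)) else 0) := by
      rw [Finset.sum_comm]
      refine Finset.sum_congr rfl fun l _ => ?_
      have hh : ∀ i : Fin N, (if i < l ∧ i = k then lam * (-(2*y k) / ((y l)^2 - (y k)^2)) else 0)
          = if i = k then (if k < l then lam * (-(2*y k) / ((y l)^2 - (y k)^2)) else 0) else 0 := by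
        intro i
        by_cases hik : i = k
        · subst hik; by_cases hkl : i < l <;> simp [hkl]
        · simp [hik]
      rw [Finset.sum_congr rfl fun i _ => hh i, Finset.sum_ite_eq' Finset.univ k]
      simp
    have e22 : (∑ i, ∑ l, (if i < l ∧ l = k then lam * ((2*y k) / ((y k)^2 - (y i)^2)) else 0))
        = ∑ i, (if i < k then lam * ((2*y k) / ((y k)^2 - (y i)^2)) else 0) := by
      refine Finset.sum_congr rfl fun i _ => ?_
      have hh : ∀ l : Fin N, (if i < l ∧ l = k then lam * ((2*y k) / ((y k)^2 - (y i)^2)) else 0)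
          = if l = k then (if i < k then lam * ((2*y k) / ((y k)^2 - (y i)^2)) else 0) else 0 := by
        intro l
        by_cases hlk : l = k
        · subst hlk; by_cases hil : i < l <;> simp [hil]
        · simp [hlk]
      rw [Finset.sum_congr rfl fun l _ => hh l, Finset.sum_ite_eq' Finset.univ k]
      simp
    rw [e21, e22, Finset.mul_sum, ← Finset.sum_add_distrib]
    refine Finset.sum_congr rfl fun l _ => ?_
    rcases lt_trichotomy k l with hc | hc | hc
    · have hne : (y l)^2 - (y k)^2 ≠ 0 := ne_of_gt (by linarith [h.yy_lt hc])
      have hne' : (y k)^2 - (y l)^2 ≠ 0 := by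
        intro hh; exact hne (by linarith [sub_eq_zero.mp hh])
      have hlk : ¬ l = k := fun hh => (lt_irrefl k (hh ▸ hc))
      have hlk2 : ¬ l < k := by intro hh; exact absurd (hc.trans hh) (lt_irrefl k)
      simp only [if_pos hc, if_neg hlk2, if_neg hlk, add_zero]
      field_simp
      ring
    · subst hc
      simp [lt_irrefl]
    · have hne : (y k)^2 - (y l)^2 ≠ 0 := ne_of_gt (by linarith [h.yy_lt hc])
      have hlk : ¬ l = k := fun hh => (lt_irrefl l (hh ▸ hc))
      have hkl2 : ¬ k < l := by intro hh; exact absurd (hc.trans hh) (lt_irrefl l)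
      simp only [if_neg hkl2, if_pos hc, if_neg hlk, zero_add]
      field_simp
  have e3 : (∑ i, ∑ l, if l = k then lam * ((2*y k) / ((y k)^2 - (x i)^2)) else 0)
      = 2*lam*(y k) * ∑ i, ((y k)^2 - (x i)^2)⁻¹ := by
    rw [Finset.mul_sum]
    refine Finset.sum_congr rfl fun i _ => ?_
    rw [Finset.sum_ite_eq' Finset.univ k]
    simp only [Finset.mem_univ, if_true]
    rw [div_eq_mul_inv]
    ring
  rw [e1, e2, e3]
  unfold uY
  ring
noncomputable def wX (N : ℕ) (mu lam : ℝ) (x y : Fin N → ℝ) (j : Fin N) : ℝ :=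
  -1 - mu * ((x j)^2)⁻¹
  + 2*lam*((∑ k, if k = j then 0 else ((x j)^2 - (x k)^2)⁻¹) + ∑ k, ((y k)^2 - (x j)^2)⁻¹)
  + 2*lam*(x j) * ((∑ k, if k = j then 0 else -(2*x j) / (((x j)^2 - (x k)^2)^2))
      + ∑ k, -(-(2*x j)) / (((y k)^2 - (x j)^2)^2))

noncomputable def wY (N : ℕ) (mu lam : ℝ) (x y : Fin N → ℝ) (k : Fin N) : ℝ :=
  1 - (lam - mu) * ((y k)^2)⁻¹
  + 2*lam*((∑ l, if l = k then 0 else ((y k)^2 - (y l)^2)⁻¹) - ∑ i, ((y k)^2 - (x i)^2)⁻¹)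
  + 2*lam*(y k) * ((∑ l, if l = k then 0 else -(2*y k) / (((y k)^2 - (y l)^2)^2))
      - ∑ i, -(2*y k) / (((y k)^2 - (x i)^2)^2))

lemma hasDerivAt_FB_x {N : ℕ} (mu lam : ℝ) {x y : Fin N → ℝ} (h : Dom N x y) (j : Fin N) :
    HasDerivAt (fun t => FB N mu lam (update x j t) y)
      (uX N mu lam x y j * FB N mu lam x y) (x j) := by
  have hmem : {t : ℝ | Dom N (update x j t) y} ∈ nhds (x j) :=
    (isOpen_dom_x x y j h).mem_nhds (by simpa [Function.update_eq_self] using h)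
  have hev : (fun t => FB N mu lam (update x j t) y) =ᶠ[nhds (x j)]
      (fun t => Real.exp (GB N mu lam (update x j t) y)) := by
    filter_upwards [hmem] with t ht
    exact FB_eq_exp mu lam ht
  have hG := (hasDerivAt_GB_x mu lam h j).exp
  rw [Function.update_eq_self] at hG
  have h2 := hG.congr_of_eventuallyEq hev
  rw [← FB_eq_exp mu lam h] at h2
  refine h2.congr_deriv ?_
  ring

lemma hasDerivAt_FB_y {N : ℕ} (mu lam : ℝ) {x y : Fin N → ℝ} (h : Dom N x y) (k : Fin N) :
    HasDerivAt (fun t => FB N mu lam x (update y k t))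
      (uY N mu lam x y k * FB N mu lam x y) (y k) := by
  have hmem : {t : ℝ | Dom N x (update y k t)} ∈ nhds (y k) :=
    (isOpen_dom_y x y k h).mem_nhds (by simpa [Function.update_eq_self] using h)
  have hev : (fun t => FB N mu lam x (update y k t)) =ᶠ[nhds (y k)]
      (fun t => Real.exp (GB N mu lam x (update y k t))) := by
    filter_upwards [hmem] with t ht
    exact FB_eq_exp mu lam ht
  have hG := (hasDerivAt_GB_y mu lam h k).exp
  rw [Function.update_eq_self] at hG
  have h2 := hG.congr_of_eventuallyEq hev
  rw [← FB_eq_exp mu lam h] at h2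
  refine h2.congr_deriv ?_
  ring

lemma pd_pd_FB_x {N : ℕ} (mu lam : ℝ) {x y : Fin N → ℝ} (h : Dom N x y) (j : Fin N) :
    pd j (pd j (fun x' => FB N mu lam x' y)) x
      = (wX N mu lam x y j + (uX N mu lam x y j)^2) * FB N mu lam x y := by
  classical
  have hxj : x j ≠ 0 := ne_of_gt (h.x_pos j)
  -- inner pd as a derivative of the 1-D slice
  have key : ∀ t : ℝ, pd j (fun x' => FB N mu lam x' y) (update x j t)
      = deriv (fun s => FB N mu lam (update x j s) y) t := by
    intro t
    unfold pd
    rw [Function.update_self]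
    congr 1
    funext s
    rw [Function.update_idem]
  -- the explicit logarithmic-derivative function
  set phi : ℝ → ℝ := fun t => -t + mu * t⁻¹ +
      2*lam*(t * ((∑ k, if k = j then 0 else (t^2 - (x k)^2)⁻¹) + ∑ k, ((y k)^2 - t^2)⁻¹))
    with hphi
  have huXt : ∀ t : ℝ, uX N mu lam (update x j t) y j = phi t := by
    intro t
    unfold uX
    rw [hphi]
    simp only [Function.update_self]
    have : (∑ k, if k = j then (0:ℝ) else ((t)^2 - (update x j t k)^2)⁻¹)
        = ∑ k, if k = j then (0:ℝ) else (t^2 - (x k)^2)⁻¹ := by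
      refine Finset.sum_congr rfl fun k _ => ?_
      by_cases hkj : k = j
      · simp [hkj]
      · rw [if_neg hkj, if_neg hkj, Function.update_of_ne hkj]
    rw [this]
    ring
  have hder : ∀ t : ℝ, Dom N (update x j t) y →
      HasDerivAt (fun s => FB N mu lam (update x j s) y)
        (phi t * FB N mu lam (update x j t) y) t := by
    intro t ht
    have h3 := hasDerivAt_FB_x mu lam ht j
    rw [huXt t] at h3
    have h4 : (fun s => FB N mu lam (update (update x j t) j s) y)
        = fun s => FB N mu lam (update x j s) y := by
      funext s; rw [Function.update_idem]
    rw [h4, Function.update_self] at h3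
    exact h3
  have hmem : {t : ℝ | Dom N (update x j t) y} ∈ nhds (x j) :=
    (isOpen_dom_x x y j h).mem_nhds (by simpa [Function.update_eq_self] using h)
  have hev : (fun t => pd j (fun x' => FB N mu lam x' y) (update x j t)) =ᶠ[nhds (x j)]
      (fun t => phi t * FB N mu lam (update x j t) y) := by
    filter_upwards [hmem] with t ht
    rw [key t, (hder t ht).deriv]
  -- derivative of phi at x j
  have hS1 : HasDerivAt (fun t : ℝ => ∑ k, if k = j then (0:ℝ) else (t^2 - (x k)^2)⁻¹)
      (∑ k, if k = j then (0:ℝ) else -(2*x j) / (((x j)^2 - (x k)^2)^2)) (x j) := by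
    refine HasDerivAt.fun_sum fun k _ => ?_
    by_cases hkj : k = j
    · simp only [if_pos hkj]; exact hasDerivAt_const _ _
    · simp only [if_neg hkj]
      have hne : (x j)^2 - (x k)^2 ≠ 0 := sub_ne_zero.mpr (h.xx_ne (Ne.symm hkj))
      exact ((hasDerivAt_sq (x j)).sub_const _).inv hne
  have hS2 : HasDerivAt (fun t : ℝ => ∑ k, ((y k)^2 - t^2)⁻¹)
      (∑ k, -(-(2*x j)) / (((y k)^2 - (x j)^2)^2)) (x j) := by
    refine HasDerivAt.fun_sum fun k _ => ?_
    have hne : (y k)^2 - (x j)^2 ≠ 0 := ne_of_gt (by linarith [h.xy_lt j k])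
    exact ((hasDerivAt_sq (x j)).const_sub _).inv hne
  have hphi' : HasDerivAt phi (wX N mu lam x y j) (x j) := by
    have h1 : HasDerivAt (fun t : ℝ => -t) (-1) (x j) := (hasDerivAt_id (x j)).neg
    have h2 : HasDerivAt (fun t : ℝ => mu * t⁻¹) (mu * -(((x j))^2)⁻¹) (x j) :=
      (hasDerivAt_inv hxj).const_mul mu
    have h5 := ((hasDerivAt_id (x j)).fun_mul (hS1.fun_add hS2)).const_mul (2*lam)
    have h6 := (h1.fun_add h2).fun_add h5
    refine h6.congr_deriv ?_
    unfold wX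
    simp only [id_eq]
    ring
  have hFBx := hasDerivAt_FB_x mu lam h j
  have hprod := hphi'.fun_mul hFBx
  have hfin : pd j (pd j (fun x' => FB N mu lam x' y)) x
      = deriv (fun t => phi t * FB N mu lam (update x j t) y) (x j) := by
    unfold pd
    exact Filter.EventuallyEq.deriv_eq hev
  rw [hfin, hprod.deriv]
  have hphix : phi (x j) = uX N mu lam x y j := by
    rw [← huXt (x j), Function.update_eq_self]
  rw [hphix, Function.update_eq_self]
  ring

lemma pd_pd_FB_y {N : ℕ} (mu lam : ℝ) {x y : Fin N → ℝ} (h : Dom N x y) (k : Fin N) :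
    pd k (pd k (fun y' => FB N mu lam x y')) y
      = (wY N mu lam x y k + (uY N mu lam x y k)^2) * FB N mu lam x y := by
  classical
  have hyk : y k ≠ 0 := ne_of_gt (h.y_pos k)
  have key : ∀ t : ℝ, pd k (fun y' => FB N mu lam x y') (update y k t)
      = deriv (fun s => FB N mu lam x (update y k s)) t := by
    intro t
    unfold pd
    rw [Function.update_self]
    congr 1
    funext s
    rw [Function.update_idem]
  set phi : ℝ → ℝ := fun t => t + (lam - mu) * t⁻¹ +
      2*lam*(t * ((∑ l, if l = k then 0 else (t^2 - (y l)^2)⁻¹) - ∑ i, (t^2 - (x i)^2)⁻¹))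
    with hphi
  have huYt : ∀ t : ℝ, uY N mu lam x (update y k t) k = phi t := by
    intro t
    unfold uY
    rw [hphi]
    simp only [Function.update_self]
    have : (∑ l, if l = k then (0:ℝ) else ((t)^2 - (update y k t l)^2)⁻¹)
        = ∑ l, if l = k then (0:ℝ) else (t^2 - (y l)^2)⁻¹ := by
      refine Finset.sum_congr rfl fun l _ => ?_
      by_cases hlk : l = k
      · simp [hlk]
      · rw [if_neg hlk, if_neg hlk, Function.update_of_ne hlk]
    rw [this]
    ring
  have hder : ∀ t : ℝ, Dom N x (update y k t) →
      HasDerivAt (fun s => FB N mu lam x (update y k s))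
        (phi t * FB N mu lam x (update y k t)) t := by
    intro t ht
    have h3 := hasDerivAt_FB_y mu lam ht k
    rw [huYt t] at h3
    have h4 : (fun s => FB N mu lam x (update (update y k t) k s))
        = fun s => FB N mu lam x (update y k s) := by
      funext s; rw [Function.update_idem]
    rw [h4, Function.update_self] at h3
    exact h3
  have hmem : {t : ℝ | Dom N x (update y k t)} ∈ nhds (y k) :=
    (isOpen_dom_y x y k h).mem_nhds (by simpa [Function.update_eq_self] using h)
  have hev : (fun t => pd k (fun y' => FB N mu lam x y') (update y k t)) =ᶠ[nhds (y k)]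
      (fun t => phi t * FB N mu lam x (update y k t)) := by
    filter_upwards [hmem] with t ht
    rw [key t, (hder t ht).deriv]
  have hS1 : HasDerivAt (fun t : ℝ => ∑ l, if l = k then (0:ℝ) else (t^2 - (y l)^2)⁻¹)
      (∑ l, if l = k then (0:ℝ) else -(2*y k) / (((y k)^2 - (y l)^2)^2)) (y k) := by
    refine HasDerivAt.fun_sum fun l _ => ?_
    by_cases hlk : l = k
    · simp only [if_pos hlk]; exact hasDerivAt_const _ _
    · simp only [if_neg hlk]
      have hne : (y k)^2 - (y l)^2 ≠ 0 := sub_ne_zero.mpr (h.yy_ne (Ne.symm hlk))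
      exact ((hasDerivAt_sq (y k)).sub_const _).inv hne
  have hS2 : HasDerivAt (fun t : ℝ => ∑ i, (t^2 - (x i)^2)⁻¹)
      (∑ i, -(2*y k) / (((y k)^2 - (x i)^2)^2)) (y k) := by
    refine HasDerivAt.fun_sum fun i _ => ?_
    have hne : (y k)^2 - (x i)^2 ≠ 0 := ne_of_gt (by linarith [h.xy_lt i k])
    exact ((hasDerivAt_sq (y k)).sub_const _).inv hne
  have hphi' : HasDerivAt phi (wY N mu lam x y k) (y k) := by
    have h1 : HasDerivAt (fun t : ℝ => t) 1 (y k) := hasDerivAt_id (y k)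
    have h2 : HasDerivAt (fun t : ℝ => (lam - mu) * t⁻¹) ((lam - mu) * -(((y k))^2)⁻¹) (y k) :=
      (hasDerivAt_inv hyk).const_mul (lam - mu)
    have h5 := ((hasDerivAt_id (y k)).fun_mul (hS1.fun_sub hS2)).const_mul (2*lam)
    have h6 := (h1.fun_add h2).fun_add h5
    refine h6.congr_deriv ?_
    unfold wY
    simp only [id_eq]
    ring
  have hFBy := hasDerivAt_FB_y mu lam h k
  have hprod := hphi'.fun_mul hFBy
  have hfin : pd k (pd k (fun y' => FB N mu lam x y')) y
      = deriv (fun t => phi t * FB N mu lam x (update y k t)) (y k) := by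
    unfold pd
    exact Filter.EventuallyEq.deriv_eq hev
  rw [hfin, hprod.deriv]
  have hphiy : phi (y k) = uY N mu lam x y k := by
    rw [← huYt (y k), Function.update_eq_self]
  rw [hphiy, Function.update_eq_self]
  ring
section Combinatorics
variable {N : ℕ}

lemma sum_swap_zero (f : Fin N → Fin N → ℝ) (hf : ∀ j k, f j k + f k j = 0) :
    ∑ j, ∑ k, f j k = 0 := by
  have h1 : ∑ j, ∑ k, f k j = ∑ j, ∑ k, f j k := Finset.sum_comm
  have h2 : ∑ j, ∑ k, (f j k + f k j) = 0 :=
    Finset.sum_eq_zero fun j _ => Finset.sum_eq_zero fun k _ => hf j k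
  simp only [Finset.sum_add_distrib] at h2
  linarith

lemma sum_swap_one (f : Fin N → Fin N → ℝ)
    (hf : ∀ j k, f j k + f k j = if k = j then 0 else 1) :
    ∑ j, ∑ k, f j k = (N:ℝ)*((N:ℝ)-1)/2 := by
  have h1 : ∑ j, ∑ k, f k j = ∑ j, ∑ k, f j k := Finset.sum_comm
  have h2 : ∑ j, ∑ k, (f j k + f k j) = ∑ j : Fin N, ∑ k : Fin N, if k = j then (0:ℝ) else 1 :=
    Finset.sum_congr rfl fun j _ => Finset.sum_congr rfl fun k _ => hf j k
  have h3 : ∑ j : Fin N, ∑ k : Fin N, (if k = j then (0:ℝ) else 1) = (N:ℝ)*((N:ℝ)-1) := by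
    have h4 : ∀ j : Fin N, ∑ k : Fin N, (if k = j then (0:ℝ) else 1) = (N:ℝ)-1 := by
      intro j
      have h5 : ∀ k : Fin N, (if k = j then (0:ℝ) else 1) = 1 - (if k = j then (1:ℝ) else 0) := by
        intro k; by_cases hkj : k = j <;> simp [hkj]
      rw [Finset.sum_congr rfl fun k _ => h5 k, Finset.sum_sub_distrib,
        Finset.sum_ite_eq' Finset.univ j fun _ => (1:ℝ)]
      simp
    rw [Finset.sum_congr rfl fun j _ => h4 j, Finset.sum_const, Finset.card_univ,
      Fintype.card_fin, nsmul_eq_mul]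
  rw [← h2] at h3
  simp only [Finset.sum_add_distrib] at h3
  linarith

lemma triple_zero (e : Fin N → Fin N → Fin N → ℝ)
    (h : ∀ j k l, e j k l + e k j l + e l k j = 0) :
    ∑ j, ∑ k, ∑ l, e j k l = 0 := by
  have h1 : ∑ j, ∑ k, ∑ l, e k j l = ∑ j, ∑ k, ∑ l, e j k l := Finset.sum_comm
  have h2 : ∑ j, ∑ k, ∑ l, e l k j = ∑ j, ∑ k, ∑ l, e j k l := by
    calc ∑ j, ∑ k, ∑ l, e l k j
        = ∑ j, ∑ l, ∑ k, e l k j := Finset.sum_congr rfl fun j _ => Finset.sum_comm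
      _ = ∑ l, ∑ j, ∑ k, e l k j := Finset.sum_comm
      _ = ∑ l, ∑ k, ∑ j, e l k j := Finset.sum_congr rfl fun l _ => Finset.sum_comm
  have h3 : ∑ j, ∑ k, ∑ l, (e j k l + e k j l + e l k j) = 0 :=
    Finset.sum_eq_zero fun j _ => Finset.sum_eq_zero fun k _ =>
      Finset.sum_eq_zero fun l _ => h j k l
  simp only [Finset.sum_add_distrib] at h3
  linarith

lemma swap23_sum (m : Fin N → Fin N → Fin N → ℝ) :
    ∑ j, ∑ k, ∑ l, m j k l = ∑ j, ∑ k, ∑ l, m j l k :=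
  Finset.sum_congr rfl fun j _ => Finset.sum_comm

end Combinatorics

noncomputable def PX (N : ℕ) (x : Fin N → ℝ) (j : Fin N) : ℝ :=
  ∑ k, if k = j then 0 else ((x j)^2 - (x k)^2)⁻¹
noncomputable def RX (N : ℕ) (x : Fin N → ℝ) (j : Fin N) : ℝ :=
  ∑ k, if k = j then 0 else (((x j)^2 - (x k)^2)^2)⁻¹
noncomputable def QX (N : ℕ) (x y : Fin N → ℝ) (j : Fin N) : ℝ :=
  ∑ k, ((y k)^2 - (x j)^2)⁻¹
noncomputable def SX (N : ℕ) (x y : Fin N → ℝ) (j : Fin N) : ℝ :=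
  ∑ k, (((y k)^2 - (x j)^2)^2)⁻¹
noncomputable def QY (N : ℕ) (x y : Fin N → ℝ) (k : Fin N) : ℝ :=
  ∑ j, ((y k)^2 - (x j)^2)⁻¹
noncomputable def SY (N : ℕ) (x y : Fin N → ℝ) (k : Fin N) : ℝ :=
  ∑ j, (((y k)^2 - (x j)^2)^2)⁻¹
section KLemmas
variable {N : ℕ}

lemma K1 (a : Fin N → ℝ) : ∑ j, PX N a j = 0 := by
  unfold PX
  refine sum_swap_zero _ fun j k => ?_
  by_cases hkj : k = j
  · subst hkj; simp
  · rw [if_neg hkj, if_neg (Ne.symm hkj)]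
    have e : (a k)^2 - (a j)^2 = -((a j)^2 - (a k)^2) := by ring
    rw [e, inv_neg]
    ring

lemma K2 (a : Fin N → ℝ) (haa : ∀ j k : Fin N, j ≠ k → (a j)^2 ≠ (a k)^2) :
    ∑ j, ((a j)^2 * PX N a j) = (N:ℝ)*((N:ℝ)-1)/2 := by
  have e : ∀ j : Fin N, (a j)^2 * PX N a j
      = ∑ k, if k = j then (0:ℝ) else (a j)^2 * ((a j)^2 - (a k)^2)⁻¹ := by
    intro j
    unfold PX
    rw [Finset.mul_sum]
    refine Finset.sum_congr rfl fun k _ => ?_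
    by_cases hkj : k = j <;> simp [hkj]
  rw [Finset.sum_congr rfl fun j _ => e j]
  refine sum_swap_one _ fun j k => ?_
  by_cases hkj : k = j
  · subst hkj; simp
  · rw [if_neg hkj, if_neg (Ne.symm hkj), if_neg hkj]
    have hne : (a j)^2 - (a k)^2 ≠ 0 := sub_ne_zero.mpr (haa j k (Ne.symm hkj))
    have e2 : (a k)^2 - (a j)^2 = -((a j)^2 - (a k)^2) := by ring
    rw [e2, inv_neg]
    field_simp
    ring

lemma pairpot (a : Fin N → ℝ) (haa : ∀ j k : Fin N, j ≠ k → (a j)^2 ≠ (a k)^2) :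
    ∑ j, ∑ k, (if j < k then ((a j)^2 + (a k)^2) / ((a j)^2 - (a k)^2)^2 else 0)
      = ∑ j, ((a j)^2 * RX N a j) := by
  have e : ∀ j : Fin N, (a j)^2 * RX N a j
      = ∑ k, if k = j then (0:ℝ) else (a j)^2 * (((a j)^2 - (a k)^2)^2)⁻¹ := by
    intro j
    unfold RX
    rw [Finset.mul_sum]
    refine Finset.sum_congr rfl fun k _ => ?_
    by_cases hkj : k = j <;> simp [hkj]
  rw [Finset.sum_congr rfl fun j _ => e j]
  have split : ∀ j k : Fin N, (if k = j then (0:ℝ) else (a j)^2 * (((a j)^2 - (a k)^2)^2)⁻¹)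
      = (if j < k then (a j)^2 * (((a j)^2 - (a k)^2)^2)⁻¹ else 0)
        + (if k < j then (a j)^2 * (((a j)^2 - (a k)^2)^2)⁻¹ else 0) := by
    intro j k
    rcases lt_trichotomy j k with hc | hc | hc
    · have h1 : ¬ k = j := fun hh => lt_irrefl j (hh ▸ hc)
      have h2 : ¬ k < j := fun hh => lt_irrefl j (hc.trans hh)
      simp [h1, h2, hc]
    · subst hc; simp [lt_irrefl]
    · have h1 : ¬ k = j := fun hh => lt_irrefl k (hh ▸ hc)
      have h2 : ¬ j < k := fun hh => lt_irrefl k (hc.trans hh)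
      simp [h1, h2, hc]
  rw [Finset.sum_congr rfl fun j _ => Finset.sum_congr rfl fun k _ => split j k]
  simp only [Finset.sum_add_distrib]
  have flip : ∑ j, ∑ k, (if k < j then (a j)^2 * (((a j)^2 - (a k)^2)^2)⁻¹ else 0)
      = ∑ j, ∑ k, (if j < k then (a k)^2 * (((a k)^2 - (a j)^2)^2)⁻¹ else 0) := by
    rw [Finset.sum_comm]
  rw [flip, ← Finset.sum_add_distrib]
  simp only [← Finset.sum_add_distrib]
  refine Finset.sum_congr rfl fun j _ => Finset.sum_congr rfl fun k _ => ?_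
  by_cases hjk : j < k
  · simp only [if_pos hjk]
    have hne : (a j)^2 - (a k)^2 ≠ 0 := sub_ne_zero.mpr (haa j k (ne_of_lt hjk))
    have e2 : ((a k)^2 - (a j)^2)^2 = ((a j)^2 - (a k)^2)^2 := by ring
    rw [e2, div_eq_mul_inv]
    ring
  · simp [hjk]

lemma K3 {x y : Fin N → ℝ} (h : Dom N x y) :
    ∑ k, ((y k)^2 * QY N x y k) - ∑ j, ((x j)^2 * QX N x y j) = (N:ℝ)^2 := by
  unfold QY QX
  have e1 : ∑ k, ((y k)^2 * ∑ j, ((y k)^2 - (x j)^2)⁻¹)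
      = ∑ j, ∑ k, ((y k)^2 * ((y k)^2 - (x j)^2)⁻¹) := by
    rw [Finset.sum_comm]
    exact Finset.sum_congr rfl fun k _ => Finset.mul_sum _ _ _
  have e2 : ∑ j, ((x j)^2 * ∑ k, ((y k)^2 - (x j)^2)⁻¹)
      = ∑ j, ∑ k, ((x j)^2 * ((y k)^2 - (x j)^2)⁻¹) :=
    Finset.sum_congr rfl fun j _ => Finset.mul_sum _ _ _
  rw [e1, e2, ← Finset.sum_sub_distrib]
  simp only [← Finset.sum_sub_distrib]
  have e3 : ∀ j k : Fin N, (y k)^2 * ((y k)^2 - (x j)^2)⁻¹ - (x j)^2 * ((y k)^2 - (x j)^2)⁻¹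
      = 1 := by
    intro j k
    have hne : (y k)^2 - (x j)^2 ≠ 0 := ne_of_gt (by linarith [h.xy_lt j k])
    field_simp
  rw [Finset.sum_congr rfl fun j _ => Finset.sum_congr rfl fun k _ => e3 j k]
  simp [Finset.sum_const]
  ring

lemma K4 {x y : Fin N → ℝ} :
    ∑ j, QX N x y j = ∑ k, QY N x y k := by
  unfold QX QY
  exact Finset.sum_comm

lemma K5 {x y : Fin N → ℝ} (h : Dom N x y) :
    ∑ k, ((y k)^2 * SY N x y k) - ∑ j, ((x j)^2 * SX N x y j) = ∑ j, QX N x y j := by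
  unfold SY SX QX
  have e1 : ∑ k, ((y k)^2 * ∑ j, (((y k)^2 - (x j)^2)^2)⁻¹)
      = ∑ j, ∑ k, ((y k)^2 * (((y k)^2 - (x j)^2)^2)⁻¹) := by
    rw [Finset.sum_comm]
    exact Finset.sum_congr rfl fun k _ => Finset.mul_sum _ _ _
  have e2 : ∑ j, ((x j)^2 * ∑ k, (((y k)^2 - (x j)^2)^2)⁻¹)
      = ∑ j, ∑ k, ((x j)^2 * (((y k)^2 - (x j)^2)^2)⁻¹) :=
    Finset.sum_congr rfl fun j _ => Finset.mul_sum _ _ _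
  rw [e1, e2, ← Finset.sum_sub_distrib]
  simp only [← Finset.sum_sub_distrib]
  refine Finset.sum_congr rfl fun j _ => Finset.sum_congr rfl fun k _ => ?_
  have hne : (y k)^2 - (x j)^2 ≠ 0 := ne_of_gt (by linarith [h.xy_lt j k])
  field_simp

end KLemmas
section KTriples
variable {N : ℕ}

lemma swap13_sum (m : Fin N → Fin N → Fin N → ℝ) :
    ∑ j, ∑ k, ∑ l, m j k l = ∑ j, ∑ k, ∑ l, m l k j := by
  calc ∑ j, ∑ k, ∑ l, m j k l
      = ∑ j, ∑ l, ∑ k, m j k l := Finset.sum_congr rfl fun j _ => Finset.sum_comm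
    _ = ∑ l, ∑ j, ∑ k, m j k l := Finset.sum_comm
    _ = ∑ l, ∑ k, ∑ j, m j k l := Finset.sum_congr rfl fun l _ => Finset.sum_comm

lemma K6 (a : Fin N → ℝ) (haa : ∀ j k : Fin N, j ≠ k → (a j)^2 ≠ (a k)^2) :
    ∑ j, ((a j)^2 * (PX N a j * PX N a j)) = ∑ j, ((a j)^2 * RX N a j) := by
  classical
  set E : Fin N → Fin N → Fin N → ℝ := fun j k l =>
    if k = j ∨ l = j ∨ k = l then 0
    else (a j)^2 * (((a j)^2 - (a k)^2)⁻¹ * ((a j)^2 - (a l)^2)⁻¹) with hE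
  have key : ∑ j, ((a j)^2 * (PX N a j * PX N a j)) - ∑ j, ((a j)^2 * RX N a j)
      = ∑ j, ∑ k, ∑ l, E j k l := by
    rw [← Finset.sum_sub_distrib]
    refine Finset.sum_congr rfl fun j _ => ?_
    unfold PX RX
    rw [Finset.sum_mul_sum]
    simp only [Finset.mul_sum]
    rw [← Finset.sum_sub_distrib]
    refine Finset.sum_congr rfl fun k _ => ?_
    have hconst : (a j)^2 * (if k = j then (0:ℝ) else (((a j)^2 - (a k)^2)^2)⁻¹)
        = ∑ l : Fin N, if l = k then
            (a j)^2 * (if k = j then (0:ℝ) else (((a j)^2 - (a k)^2)^2)⁻¹) else 0 := by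
      rw [Finset.sum_ite_eq' Finset.univ k]
      simp
    rw [hconst, ← Finset.sum_sub_distrib]
    refine Finset.sum_congr rfl fun l _ => ?_
    simp only [hE]
    by_cases h1 : k = j
    · simp only [if_pos h1, if_pos (Or.inl h1)]
      simp
    · by_cases h2 : l = j
      · have h4 : ¬ l = k := by rw [h2]; intro hh; exact h1 hh.symm
        rw [if_neg h1, if_pos h2, if_neg h4, if_pos (Or.inr (Or.inl h2))]
        simp
      · by_cases h3 : k = l
        · have h4 : l = k := h3.symm
          have hne : (a j)^2 - (a k)^2 ≠ 0 :=
            sub_ne_zero.mpr (haa j k fun hh => h1 hh.symm)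
          rw [if_neg h1, if_neg h2, if_pos h4, if_pos (Or.inr (Or.inr h3)), if_neg h1, h4]
          field_simp
          ring
        · have h4 : ¬ l = k := fun hh => h3 hh.symm
          rw [if_neg h1, if_neg h2, if_neg h4,
            if_neg (by rintro (hh | hh | hh) <;> [exact h1 hh; exact h2 hh; exact h3 hh])]
          ring
  have tz : ∑ j, ∑ k, ∑ l, E j k l = 0 := by
    refine triple_zero E fun j k l => ?_
    simp only [hE]
    by_cases h1 : k = j
    · rw [if_pos (Or.inl h1), if_pos (Or.inl h1.symm), if_pos (Or.inr (Or.inr h1))]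
      simp
    · by_cases h2 : l = j
      · rw [if_pos (Or.inr (Or.inl h2)), if_pos (Or.inr (Or.inr h2.symm)),
          if_pos (Or.inr (Or.inl h2.symm))]
        simp
      · by_cases h3 : k = l
        · rw [if_pos (Or.inr (Or.inr h3)), if_pos (Or.inr (Or.inl h3.symm)),
            if_pos (Or.inl h3)]
          simp
        · have hne1 : (a j)^2 - (a k)^2 ≠ 0 := sub_ne_zero.mpr (haa j k fun hh => h1 hh.symm)
          have hne2 : (a j)^2 - (a l)^2 ≠ 0 := sub_ne_zero.mpr (haa j l fun hh => h2 hh.symm)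
          have hne3 : (a k)^2 - (a j)^2 ≠ 0 := sub_ne_zero.mpr (haa k j h1)
          have hne4 : (a k)^2 - (a l)^2 ≠ 0 := sub_ne_zero.mpr (haa k l h3)
          have hne5 : (a l)^2 - (a j)^2 ≠ 0 := sub_ne_zero.mpr (haa l j h2)
          have hne6 : (a l)^2 - (a k)^2 ≠ 0 := sub_ne_zero.mpr (haa l k fun hh => h3 hh.symm)
          rw [if_neg (by rintro (hh | hh | hh) <;> [exact h1 hh; exact h2 hh; exact h3 hh]),
            if_neg (by rintro (hh | hh | hh) <;>
              [exact h1 hh.symm; exact h3 hh.symm; exact h2 hh.symm]),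
            if_neg (by rintro (hh | hh | hh) <;>
              [exact h3 hh; exact h2 hh.symm; exact h1 hh])]
          field_simp
          ring
  linarith

end KTriples
section KMixed
variable {N : ℕ}

lemma K8 {x y : Fin N → ℝ} (h : Dom N x y) :
    ∑ j, ((x j)^2 * (QX N x y j * QX N x y j)) - ∑ j, ((x j)^2 * SX N x y j)
      + 2 * ∑ k, ((y k)^2 * (PX N y k * QY N x y k)) = 0 := by
  classical
  set M1 : Fin N → Fin N → Fin N → ℝ := fun j k l =>
    if l = k then 0 else (x j)^2 * (((y k)^2 - (x j)^2)⁻¹ * ((y l)^2 - (x j)^2)⁻¹) with hM1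
  set M2 : Fin N → Fin N → Fin N → ℝ := fun j k l =>
    if l = k then 0 else (y k)^2 * (((y k)^2 - (y l)^2)⁻¹ * ((y k)^2 - (x j)^2)⁻¹) with hM2
  have eA : ∑ j, ((x j)^2 * (QX N x y j * QX N x y j)) - ∑ j, ((x j)^2 * SX N x y j)
      = ∑ j, ∑ k, ∑ l, M1 j k l := by
    rw [← Finset.sum_sub_distrib]
    refine Finset.sum_congr rfl fun j _ => ?_
    unfold QX SX
    rw [Finset.sum_mul_sum]
    simp only [Finset.mul_sum]
    rw [← Finset.sum_sub_distrib]
    refine Finset.sum_congr rfl fun k _ => ?_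
    have hconst : (x j)^2 * ((((y k)^2 - (x j)^2)^2)⁻¹)
        = ∑ l : Fin N, if l = k then (x j)^2 * ((((y k)^2 - (x j)^2)^2)⁻¹) else 0 := by
      rw [Finset.sum_ite_eq' Finset.univ k]
      simp
    rw [hconst, ← Finset.sum_sub_distrib]
    refine Finset.sum_congr rfl fun l _ => ?_
    simp only [hM1]
    by_cases hlk : l = k
    · rw [if_pos hlk, if_pos hlk, hlk]
      have hne : (y k)^2 - (x j)^2 ≠ 0 := ne_of_gt (by linarith [h.xy_lt j k])
      field_simp
      ring
    · rw [if_neg hlk, if_neg hlk]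
      ring
  have eB : ∑ k, ((y k)^2 * (PX N y k * QY N x y k)) = ∑ j, ∑ k, ∑ l, M2 j k l := by
    have e1 : ∑ j, ∑ k, ∑ l, M2 j k l = ∑ k, ∑ j, ∑ l, M2 j k l := Finset.sum_comm
    rw [e1, Finset.sum_congr rfl fun k (_ : k ∈ Finset.univ) => (Finset.sum_comm :
      ∑ j, ∑ l, M2 j k l = ∑ l, ∑ j, M2 j k l)]
    refine Finset.sum_congr rfl fun k _ => ?_
    unfold PX QY
    rw [Finset.sum_mul_sum]
    simp only [Finset.mul_sum]
    refine Finset.sum_congr rfl fun l _ => Finset.sum_congr rfl fun j _ => ?_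
    simp only [hM2]
    by_cases hlk : l = k
    · simp [hlk]
    · rw [if_neg hlk, if_neg hlk]
  have pointwise : ∀ j k l, M1 j k l + M2 j k l + M2 j l k = 0 := by
    intro j k l
    simp only [hM1, hM2]
    by_cases hlk : l = k
    · rw [if_pos hlk, if_pos hlk, if_pos hlk.symm]
      simp
    · have hkl : k ≠ l := fun hh => hlk hh.symm
      have hne1 : (y k)^2 - (y l)^2 ≠ 0 := sub_ne_zero.mpr (h.yy_ne hkl)
      have hne2 : (y l)^2 - (y k)^2 ≠ 0 := sub_ne_zero.mpr (h.yy_ne fun hh => hkl hh.symm)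
      have hne3 : (y k)^2 - (x j)^2 ≠ 0 := ne_of_gt (by linarith [h.xy_lt j k])
      have hne4 : (y l)^2 - (x j)^2 ≠ 0 := ne_of_gt (by linarith [h.xy_lt j l])
      rw [if_neg hlk, if_neg hlk, if_neg (fun hh => hlk hh.symm : ¬ k = l)]
      field_simp
      ring
  have swap : ∑ j, ∑ k, ∑ l, M2 j l k = ∑ j, ∑ k, ∑ l, M2 j k l := (swap23_sum _).symm
  have total : ∑ j, ∑ k, ∑ l, (M1 j k l + M2 j k l + M2 j l k) = 0 :=
    Finset.sum_eq_zero fun j _ => Finset.sum_eq_zero fun k _ =>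
      Finset.sum_eq_zero fun l _ => pointwise j k l
  simp only [Finset.sum_add_distrib] at total
  rw [swap] at total
  linarith [eA, eB, total]

lemma K9 {x y : Fin N → ℝ} (h : Dom N x y) :
    - ∑ k, ((y k)^2 * (QY N x y k * QY N x y k)) + ∑ k, ((y k)^2 * SY N x y k)
      + 2 * ∑ j, ((x j)^2 * (PX N x j * QX N x y j)) = 0 := by
  classical
  set M3 : Fin N → Fin N → Fin N → ℝ := fun j k l =>
    if l = j then 0 else -((y k)^2 * (((y k)^2 - (x j)^2)⁻¹ * ((y k)^2 - (x l)^2)⁻¹)) with hM3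
  set M4 : Fin N → Fin N → Fin N → ℝ := fun j k l =>
    if l = j then 0 else (x j)^2 * (((x j)^2 - (x l)^2)⁻¹ * ((y k)^2 - (x j)^2)⁻¹) with hM4
  have eA : - ∑ k, ((y k)^2 * (QY N x y k * QY N x y k)) + ∑ k, ((y k)^2 * SY N x y k)
      = ∑ j, ∑ k, ∑ l, M3 j k l := by
    rw [(Finset.sum_comm : ∑ j, ∑ k, ∑ l, M3 j k l = ∑ k, ∑ j, ∑ l, M3 j k l),
      ← Finset.sum_neg_distrib, ← Finset.sum_add_distrib]
    refine Finset.sum_congr rfl fun k _ => ?_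
    unfold QY SY
    rw [Finset.sum_mul_sum]
    simp only [Finset.mul_sum]
    rw [← Finset.sum_neg_distrib, ← Finset.sum_add_distrib]
    refine Finset.sum_congr rfl fun j _ => ?_
    have hconst : (y k)^2 * ((((y k)^2 - (x j)^2)^2)⁻¹)
        = ∑ l : Fin N, if l = j then (y k)^2 * ((((y k)^2 - (x j)^2)^2)⁻¹) else 0 := by
      rw [Finset.sum_ite_eq' Finset.univ j]
      simp
    rw [hconst, ← Finset.sum_neg_distrib, ← Finset.sum_add_distrib]
    refine Finset.sum_congr rfl fun l _ => ?_
    simp only [hM3]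
    by_cases hlj : l = j
    · rw [if_pos hlj, if_pos hlj, hlj]
      have hne : (y k)^2 - (x j)^2 ≠ 0 := ne_of_gt (by linarith [h.xy_lt j k])
      field_simp
      ring
    · rw [if_neg hlj, if_neg hlj]
      ring
  have eB : ∑ j, ((x j)^2 * (PX N x j * QX N x y j)) = ∑ j, ∑ k, ∑ l, M4 j k l := by
    rw [Finset.sum_congr rfl fun j (_ : j ∈ Finset.univ) => (Finset.sum_comm :
      ∑ k, ∑ l, M4 j k l = ∑ l, ∑ k, M4 j k l)]
    refine Finset.sum_congr rfl fun j _ => ?_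
    unfold PX QX
    rw [Finset.sum_mul_sum]
    simp only [Finset.mul_sum]
    refine Finset.sum_congr rfl fun l _ => Finset.sum_congr rfl fun k _ => ?_
    simp only [hM4]
    by_cases hlj : l = j
    · simp [hlj]
    · rw [if_neg hlj, if_neg hlj]
  have pointwise : ∀ j k l, M3 j k l + M4 j k l + M4 l k j = 0 := by
    intro j k l
    simp only [hM3, hM4]
    by_cases hlj : l = j
    · rw [if_pos hlj, if_pos hlj, if_pos hlj.symm]
      simp
    · have hjl : j ≠ l := fun hh => hlj hh.symm
      have hne1 : (x j)^2 - (x l)^2 ≠ 0 := sub_ne_zero.mpr (h.xx_ne hjl)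
      have hne2 : (x l)^2 - (x j)^2 ≠ 0 := sub_ne_zero.mpr (h.xx_ne fun hh => hjl hh.symm)
      have hne3 : (y k)^2 - (x j)^2 ≠ 0 := ne_of_gt (by linarith [h.xy_lt j k])
      have hne4 : (y k)^2 - (x l)^2 ≠ 0 := ne_of_gt (by linarith [h.xy_lt l k])
      rw [if_neg hlj, if_neg hlj, if_neg (fun hh => hlj hh.symm : ¬ j = l)]
      field_simp
      ring
  have swap : ∑ j, ∑ k, ∑ l, M4 l k j = ∑ j, ∑ k, ∑ l, M4 j k l := (swap13_sum _).symm
  have total : ∑ j, ∑ k, ∑ l, (M3 j k l + M4 j k l + M4 l k j) = 0 :=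
    Finset.sum_eq_zero fun j _ => Finset.sum_eq_zero fun k _ =>
      Finset.sum_eq_zero fun l _ => pointwise j k l
  simp only [Finset.sum_add_distrib] at total
  rw [swap] at total
  linarith [eA, eB, total]

end KMixed
lemma eLX {N : ℕ} (mu lam : ℝ) {x y : Fin N → ℝ} (h : Dom N x y) (j : Fin N) :
    -(wX N mu lam x y j + (uX N mu lam x y j)^2) + ((x j)^2 + mu*(mu-1)/(x j)^2)
    = (2*mu+1)
      + (4*lam)*((x j)^2 * PX N x j) + (4*lam)*((x j)^2 * QX N x y j)
      + (-(4*lam*mu)-2*lam)*(PX N x j) + (-(4*lam*mu)-2*lam)*(QX N x y j)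
      + (-(4*lam^2))*((x j)^2 * (PX N x j * PX N x j))
      + (-(8*lam^2))*((x j)^2 * (PX N x j * QX N x y j))
      + (-(4*lam^2))*((x j)^2 * (QX N x y j * QX N x y j))
      + (4*lam)*((x j)^2 * RX N x j) + (-(4*lam))*((x j)^2 * SX N x y j) := by
  have hxj : x j ≠ 0 := ne_of_gt (h.x_pos j)
  have cR : (∑ k, if k = j then (0:ℝ) else -(2*x j) / (((x j)^2-(x k)^2)^2))
      = -(2*x j) * ∑ k, (if k = j then (0:ℝ) else (((x j)^2-(x k)^2)^2)⁻¹) := by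
    rw [Finset.mul_sum]
    refine Finset.sum_congr rfl fun k _ => ?_
    by_cases hkj : k = j
    · simp [hkj]
    · rw [if_neg hkj, if_neg hkj, div_eq_mul_inv]
  have cS : (∑ k, -(-(2*x j)) / (((y k)^2-(x j)^2)^2))
      = (2*x j) * ∑ k, ((((y k)^2-(x j)^2)^2)⁻¹) := by
    rw [Finset.mul_sum]
    refine Finset.sum_congr rfl fun k _ => ?_
    rw [div_eq_mul_inv]
    ring
  unfold wX uX PX QX RX SX
  rw [cR, cS]
  generalize (∑ k, if k = j then (0:ℝ) else ((x j)^2-(x k)^2)⁻¹) = P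
  generalize (∑ k, ((y k)^2-(x j)^2)⁻¹) = Q
  generalize (∑ k, if k = j then (0:ℝ) else (((x j)^2-(x k)^2)^2)⁻¹) = R
  generalize (∑ k, (((y k)^2-(x j)^2)^2)⁻¹) = S
  field_simp
  ring

lemma eLY {N : ℕ} (mu lam : ℝ) {x y : Fin N → ℝ} (h : Dom N x y) (k : Fin N) :
    -(wY N mu lam x y k + (uY N mu lam x y k)^2) + ((y k)^2 + (lam-mu)*((lam-mu)-1)/(y k)^2)
    = (-(2*(lam-mu))-1)
      + (-(4*lam))*((y k)^2 * PX N y k) + (4*lam)*((y k)^2 * QY N x y k)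
      + (-(4*lam*(lam-mu))-2*lam)*(PX N y k) + ((4*lam*(lam-mu))+2*lam)*(QY N x y k)
      + (-(4*lam^2))*((y k)^2 * (PX N y k * PX N y k))
      + (8*lam^2)*((y k)^2 * (PX N y k * QY N x y k))
      + (-(4*lam^2))*((y k)^2 * (QY N x y k * QY N x y k))
      + (4*lam)*((y k)^2 * RX N y k) + (-(4*lam))*((y k)^2 * SY N x y k) := by
  have hyk : y k ≠ 0 := ne_of_gt (h.y_pos k)
  have cR : (∑ l, if l = k then (0:ℝ) else -(2*y k) / (((y k)^2-(y l)^2)^2))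
      = -(2*y k) * ∑ l, (if l = k then (0:ℝ) else (((y k)^2-(y l)^2)^2)⁻¹) := by
    rw [Finset.mul_sum]
    refine Finset.sum_congr rfl fun l _ => ?_
    by_cases hlk : l = k
    · simp [hlk]
    · rw [if_neg hlk, if_neg hlk, div_eq_mul_inv]
  have cS : (∑ i, -(2*y k) / (((y k)^2-(x i)^2)^2))
      = -(2*y k) * ∑ i, ((((y k)^2-(x i)^2)^2)⁻¹) := by
    rw [Finset.mul_sum]
    refine Finset.sum_congr rfl fun i _ => ?_
    rw [div_eq_mul_inv]
  unfold wY uY PX QY RX SY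
  rw [cR, cS]
  generalize (∑ l, if l = k then (0:ℝ) else ((y k)^2-(y l)^2)⁻¹) = P
  generalize (∑ i, ((y k)^2-(x i)^2)⁻¹) = Q
  generalize (∑ l, if l = k then (0:ℝ) else (((y k)^2-(y l)^2)^2)⁻¹) = R
  generalize (∑ i, (((y k)^2-(x i)^2)^2)⁻¹) = S
  field_simp
  ring

lemma scalar_main {N : ℕ} (mu lam : ℝ) {x y : Fin N → ℝ} (h : Dom N x y) :
    (∑ j, (-(wX N mu lam x y j + (uX N mu lam x y j)^2) + ((x j)^2 + mu*(mu-1)/(x j)^2)))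
    + 4*lam*(lam-1) * ∑ j, ∑ k,
        (if j < k then ((x j)^2 + (x k)^2) / ((x j)^2 - (x k)^2)^2 else 0)
    = (∑ k, (-(wY N mu lam x y k + (uY N mu lam x y k)^2)
        + ((y k)^2 + (lam-mu)*((lam-mu)-1)/(y k)^2)))
      + 4*lam*(lam-1) * ∑ j, ∑ k,
          (if j < k then ((y j)^2 + (y k)^2) / ((y j)^2 - (y k)^2)^2 else 0)
      + 2*(1-lam)*(N:ℝ) := by
  have haax : ∀ j k : Fin N, j ≠ k → (x j)^2 ≠ (x k)^2 := fun j k hjk => h.xx_ne hjk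
  have haay : ∀ j k : Fin N, j ≠ k → (y j)^2 ≠ (y k)^2 := fun j k hjk => h.yy_ne hjk
  rw [pairpot x haax, pairpot y haay,
    Finset.sum_congr rfl fun j _ => eLX mu lam h j,
    Finset.sum_congr rfl fun k _ => eLY mu lam h k]
  simp only [Finset.sum_add_distrib, ← Finset.mul_sum, Finset.sum_const, Finset.card_univ,
    Fintype.card_fin, nsmul_eq_mul]
  have k1x := K1 x
  have k1y := K1 y
  have k2x := K2 x haax
  have k2y := K2 y haay
  have k3 := K3 h
  have k4 : ∑ j, QX N x y j = ∑ k, QY N x y k := K4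
  have k5 := K5 h
  have k6x := K6 x haax
  have k6y := K6 y haay
  have k8 := K8 h
  have k9 := K9 h
  linear_combination (-(4*lam^2)) * k6x + (4*lam^2) * k6y + (-(4*lam^2)) * k9
    + (-(4*lam^2)) * k8 + (4*lam^2+4*lam) * k5 + (4*lam^2+2*lam-4*lam*mu) * k4
    + (-(4*lam)) * k3 + (4*lam) * k2x + (4*lam) * k2y + (-(4*lam*mu)-2*lam) * k1x
    + (4*lam*(lam-mu)+2*lam) * k1y
theorem stmt_13 (N : ℕ) (hN : 1 ≤ N) (lam mu : ℝ) (hlam : 0 < lam) (hmu : 0 < mu) :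
    ∀ x y : Fin N → ℝ,
      0 < x ⟨0, by omega⟩ → (∀ j k : Fin N, j < k → x j < x k) →
      0 < y ⟨0, by omega⟩ → (∀ j k : Fin N, j < k → y j < y k) →
      x ⟨N-1, by omega⟩ < y ⟨0, by omega⟩ →
      calogeroB N mu lam (fun x' => FB N mu lam x' y) x =
        calogeroB N (lam - mu) lam (fun y' => FB N mu lam x y') y +
          (2*(1-lam)*(N:ℝ)) * FB N mu lam x y := by
  intro x y hx0 hxm hy0 hym hxy
  have hxpos : ∀ j : Fin N, 0 < x j := by
    intro j
    rcases eq_or_ne j ⟨0, by omega⟩ with hj | hj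
    · rw [hj]; exact hx0
    · have hlt : (⟨0, by omega⟩ : Fin N) < j :=
        lt_of_le_of_ne (by simp [Fin.le_def]) (Ne.symm hj)
      exact lt_trans hx0 (hxm _ _ hlt)
  have hypos : ∀ j : Fin N, 0 < y j := by
    intro j
    rcases eq_or_ne j ⟨0, by omega⟩ with hj | hj
    · rw [hj]; exact hy0
    · have hlt : (⟨0, by omega⟩ : Fin N) < j :=
        lt_of_le_of_ne (by simp [Fin.le_def]) (Ne.symm hj)
      exact lt_trans hy0 (hym _ _ hlt)
  have hxyall : ∀ j k : Fin N, x j < y k := by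
    intro j k
    have h1 : x j ≤ x ⟨N-1, by omega⟩ := by
      rcases eq_or_ne j ⟨N-1, by omega⟩ with hj | hj
      · rw [hj]
      · have hlt : j < (⟨N-1, by omega⟩ : Fin N) := by
          refine lt_of_le_of_ne ?_ hj
          have := j.isLt
          simp only [Fin.le_def]
          omega
        exact le_of_lt (hxm _ _ hlt)
    have h2 : y ⟨0, by omega⟩ ≤ y k := by
      rcases eq_or_ne k ⟨0, by omega⟩ with hk | hk
      · rw [hk]
      · have hlt : (⟨0, by omega⟩ : Fin N) < k :=
          lt_of_le_of_ne (by simp [Fin.le_def]) (Ne.symm hk)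
        exact le_of_lt (hym _ _ hlt)
    exact lt_of_le_of_lt h1 (lt_of_lt_of_le hxy h2)
  have h : Dom N x y := ⟨hxpos, hxm, hypos, hym, hxyall⟩
  unfold calogeroB
  beta_reduce
  have eL1 : ∀ j : Fin N,
      - pd j (pd j (fun x' => FB N mu lam x' y)) x
        + ((x j)^2 + mu*(mu-1)/(x j)^2) * FB N mu lam x y
      = (-(wX N mu lam x y j + (uX N mu lam x y j)^2)
        + ((x j)^2 + mu*(mu-1)/(x j)^2)) * FB N mu lam x y := by
    intro j
    rw [pd_pd_FB_x mu lam h j]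
    ring
  have eL2 : ∀ k : Fin N,
      - pd k (pd k (fun y' => FB N mu lam x y')) y
        + ((y k)^2 + (lam-mu)*((lam-mu)-1)/(y k)^2) * FB N mu lam x y
      = (-(wY N mu lam x y k + (uY N mu lam x y k)^2)
        + ((y k)^2 + (lam-mu)*((lam-mu)-1)/(y k)^2)) * FB N mu lam x y := by
    intro k
    rw [pd_pd_FB_y mu lam h k]
    ring
  have ePx : ∀ j k : Fin N,
      (if j < k then ((x j)^2+(x k)^2)/(((x j)^2-(x k)^2)^2) * FB N mu lam x y else 0)
      = (if j < k then ((x j)^2+(x k)^2)/(((x j)^2-(x k)^2)^2) else 0) * FB N mu lam x y := by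
    intro j k
    split_ifs <;> simp
  have ePy : ∀ j k : Fin N,
      (if j < k then ((y j)^2+(y k)^2)/(((y j)^2-(y k)^2)^2) * FB N mu lam x y else 0)
      = (if j < k then ((y j)^2+(y k)^2)/(((y j)^2-(y k)^2)^2) else 0) * FB N mu lam x y := by
    intro j k
    split_ifs <;> simp
  rw [Finset.sum_congr rfl fun j _ => eL1 j, Finset.sum_congr rfl fun k _ => eL2 k,
    Finset.sum_congr rfl fun j _ => Finset.sum_congr rfl fun k _ => ePx j k,
    Finset.sum_congr rfl fun j _ => Finset.sum_congr rfl fun k _ => ePy j k]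
  simp only [← Finset.sum_mul]
  linear_combination FB N mu lam x y * scalar_main mu lam h
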